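/- arXiv:2411.05334 — 2 statements merged into one kernel-verified Lean document; each statement's English description precedes it below -/
import Mathlib

section
/- Product formula (closure of double almost-Riordan arrays under matrix multiplication): Let (b|g;f₁,f₂) = (d_{n,k}) and (c|d;h₁,h₂) = (e_{n,k}) be double almost-Riordan arrays, and write c = Σ_{k≥0} c_{2k}t^{2k}, and set C' := Σ_{k≥0} c_{2k+2}t^{k}, Ď := Σ_{k≥0} d_{2k}t^{k}, H₁ := Σ_{k≥0} h_{1,2k+1}t^{k}, H₂ := Σ_{k≥0} h_{2,2k+1}t^{k} (so that d = Ď(t²), h₁ = t·H₁(t²), h₂ = t·H₂(t²)). Then the matrix product, defined by (D·E)_{n,k} = Σ_{j=0}^{n} d_{n,j}e_{j,k}, equals the double almost-Riordan array (b*|g*;f₁*,f₂*), where b* = c₀·b + t·g·f₁·(C'∘(f₁f₂)), g* = g·(Ď∘(f₁f₂)), f₁* = f₁·(H₁∘(f₁f₂)) and f₂* = f₂·(H₂∘(f₁f₂)). (This is the product formula (b|g;f₁,f₂)(c|d;h₁,h₂) = ( c₀b + (tg/f₂)(c(√(f₁f₂))−c₀) | g·d(√(f₁f₂)); √(f₁/f₂)h₁(√(f₁f₂)),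 √(f₂/f₁)h₂(√(f₁f₂)) ).) -/
/-! The `n`-th row of `(b | g ; f₁, f₂)` sends a column `w + t·A(t²) + t²·B(t²)` to
`[tⁿ](w·b + t·g·A(f₁f₂) + t·g·f₁·B(f₁f₂))`: the odd-indexed columns of the array are
`t·g·(f₁f₂)^ℓ` and the even-indexed ones `t·g·f₁·(f₁f₂)^ℓ`. Every column of `(c | d ; h₁, h₂)`
has this shape, because `d = Ď(t²)`, `h₁h₂ = (t·H₁H₂)(t²)` and `c = c₀ + t²·C'(t²)`.
Substituting `f₁f₂` is a ring homomorphism, so the resulting series are the columns of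
`(b* | g* ; f₁*, f₂*)`. -/

open PowerSeries

variable {K : Type*} [Field K]

/-- Formal substitution `U ∘ h` of a power series `h` (intended with `h(0) = 0`)
into a power series `U`:  `[tⁿ](U∘h) = Σ_{j≤n} ([tʲ]U)·[tⁿ](hʲ)`. -/
noncomputable def psComp (U h : PowerSeries K) : PowerSeries K :=
  PowerSeries.mk fun n => ∑ j ∈ Finset.range (n + 1), coeff j U * coeff n (h ^ j)

/-- The `(n,k)` entry of the double almost-Riordan array `(b | g ; f₁, f₂)`:
column 0 is `b`, column `2ℓ+1` is `t·g·(f₁f₂)^ℓ`, column `2ℓ+2` is `t·g·f₁·(f₁f₂)^ℓ`. -/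
noncomputable def dar (b g f₁ f₂ : PowerSeries K) (n k : ℕ) : K :=
  if k = 0 then coeff n b
  else if k % 2 = 1 then coeff n (X * g * (f₁ * f₂) ^ ((k - 1) / 2))
  else coeff n (X * g * f₁ * (f₁ * f₂) ^ ((k - 2) / 2))

open Finset

section Expand

variable {R : Type*} [CommRing R]

theorem eq_expand_two {d D : R⟦X⟧} (hd : ∀ k, coeff (2 * k + 1) d = 0)
    (hD : ∀ k, coeff k D = coeff (2 * k) d) : d = expand 2 two_ne_zero D := by
  ext j
  obtain ⟨k, rfl | rfl⟩ := Nat.even_or_odd' j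
  · rw [coeff_expand_mul, hD]
  · rw [hd, coeff_expand_of_not_dvd _ _ _ (by omega)]

theorem eq_X_mul_expand_two {h H : R⟦X⟧} (hh : ∀ k, coeff (2 * k) h = 0)
    (hH : ∀ k, coeff k H = coeff (2 * k + 1) h) : h = X * expand 2 two_ne_zero H := by
  ext j
  obtain ⟨k, rfl | rfl⟩ := Nat.even_or_odd' j
  · rcases k with _ | k
    · simpa using hh 0
    · rw [hh, show 2 * (k + 1) = 2 * k + 1 + 1 by ring, coeff_succ_X_mul,
        coeff_expand_of_not_dvd _ _ _ (by omega)]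
  · rw [coeff_succ_X_mul, coeff_expand_mul, hH]

theorem eq_C_add_X_sq_mul_expand_two {c C' : R⟦X⟧} (hc : ∀ k, coeff (2 * k + 1) c = 0)
    (hC' : ∀ k, coeff k C' = coeff (2 * k + 2) c) :
    c = C (constantCoeff c) + X ^ 2 * expand 2 two_ne_zero C' := by
  rw [← expand_X 2 two_ne_zero, ← map_mul]
  ext j
  obtain ⟨k, rfl | rfl⟩ := Nat.even_or_odd' j
  · rcases k with _ | k
    · simp
    · rw [map_add, coeff_C, if_neg (by omega), coeff_expand_mul, coeff_succ_X_mul, hC', zero_add,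
        mul_add, mul_one]
  · rw [hc, map_add, coeff_C, if_neg (by omega), coeff_expand_of_not_dvd _ _ _ (by omega),
      add_zero]

variable (w : R) (A B : R⟦X⟧)

theorem coeff_zero_C_add_X_mul_expand_two :
    coeff 0 (C w + X * expand 2 two_ne_zero A + X ^ 2 * expand 2 two_ne_zero B) = w := by
  simp

theorem coeff_odd_C_add_X_mul_expand_two (ℓ : ℕ) :
    coeff (2 * ℓ + 1) (C w + X * expand 2 two_ne_zero A + X ^ 2 * expand 2 two_ne_zero B) =
      coeff ℓ A := by
  rw [← expand_X 2 two_ne_zero, ← map_mul, map_add, map_add, coeff_C, if_neg (by omega),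
    coeff_succ_X_mul, coeff_expand_mul, coeff_expand_of_not_dvd _ _ _ (by omega), zero_add,
    add_zero]

theorem coeff_even_C_add_X_mul_expand_two (ℓ : ℕ) :
    coeff (2 * ℓ + 2) (C w + X * expand 2 two_ne_zero A + X ^ 2 * expand 2 two_ne_zero B) =
      coeff ℓ B := by
  rw [← expand_X 2 two_ne_zero, ← map_mul, map_add, map_add, coeff_C, if_neg (by omega),
    coeff_succ_X_mul, coeff_expand_of_not_dvd _ _ _ (by omega),
    show 2 * ℓ + 2 = 2 * (ℓ + 1) by ring, coeff_expand_mul, coeff_succ_X_mul, zero_add, zero_add]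

end Expand

theorem PowerSeries.coeff_pow_eq_zero_of_lt {R : Type*} [CommRing R] {F : R⟦X⟧}
    (hF : constantCoeff F = 0) {n j : ℕ} (h : n < j) : coeff n (F ^ j) = 0 :=
  coeff_of_lt_order n <| (Nat.cast_lt.2 h).trans_le (le_order_pow_of_constantCoeff_eq_zero j hF)

theorem Finset.sum_range_two_mul_add_one {M : Type*} [AddCommMonoid M] (f : ℕ → M) (N : ℕ) :
    ∑ j ∈ range (2 * N + 1), f j = f 0 + ∑ ℓ ∈ range N, (f (2 * ℓ + 1) + f (2 * ℓ + 2)) := by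
  induction N with
  | zero => simp
  | succ N ih =>
    rw [show 2 * (N + 1) + 1 = 2 * N + 1 + 1 + 1 by ring, sum_range_succ, sum_range_succ, ih,
      sum_range_succ, add_assoc, add_assoc]

section Composition

variable {F : K⟦X⟧}

theorem coeff_psComp (hF : constantCoeff F = 0) (U : K⟦X⟧) {n N : ℕ} (h : n < N) :
    coeff n (psComp U F) = ∑ i ∈ range N, coeff i U * coeff n (F ^ i) := by
  rw [psComp, coeff_mk]
  refine sum_subset (range_subset_range.2 h) fun i _ hi => ?_
  rw [coeff_pow_eq_zero_of_lt hF (by simpa using hi), mul_zero]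

theorem psComp_eq_substAlgHom (hF : constantCoeff F = 0) (U : K⟦X⟧) :
    psComp U F = substAlgHom (HasSubst.of_constantCoeff_zero' hF) U := by
  ext n
  rw [coe_substAlgHom, coeff_subst' (HasSubst.of_constantCoeff_zero' hF),
    coeff_psComp hF U (lt_add_one n), finsum_eq_sum_of_support_subset _ (s := range (n + 1))]
  · rfl
  · refine Function.support_subset_iff'.2 fun i hi => ?_
    rw [coeff_pow_eq_zero_of_lt hF (by simpa using hi), smul_zero]

theorem coeff_mul_psComp (hF : constantCoeff F = 0) (P U : K⟦X⟧) (n : ℕ) :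
    coeff n (P * psComp U F) = ∑ ℓ ∈ range (n + 1), coeff ℓ U * coeff n (P * F ^ ℓ) := by
  calc coeff n (P * psComp U F)
      = ∑ p ∈ antidiagonal n, coeff p.1 P *
          ∑ ℓ ∈ range (n + 1), coeff ℓ U * coeff p.2 (F ^ ℓ) := by
        rw [coeff_mul]
        refine sum_congr rfl fun p hp => ?_
        rw [coeff_psComp hF U (N := n + 1) (by have := mem_antidiagonal.1 hp; omega)]
    _ = ∑ ℓ ∈ range (n + 1), coeff ℓ U * coeff n (P * F ^ ℓ) := by
        simp_rw [coeff_mul, mul_sum]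
        rw [sum_comm]
        exact sum_congr rfl fun _ _ => sum_congr rfl fun _ _ => by ring

end Composition

section DoubleAlmostRiordan

variable (b g f₁ f₂ : K⟦X⟧)

@[simp]
theorem dar_zero (n : ℕ) : dar b g f₁ f₂ n 0 = coeff n b := by simp [dar]

@[simp]
theorem dar_two_mul_add_one (n m : ℕ) :
    dar b g f₁ f₂ n (2 * m + 1) = coeff n (X * g * (f₁ * f₂) ^ m) := by
  simp [dar, show (2 * m + 1) % 2 = 1 by omega]

@[simp]
theorem dar_two_mul_add_two (n m : ℕ) :
    dar b g f₁ f₂ n (2 * m + 2) = coeff n (X * g * f₁ * (f₁ * f₂) ^ m) := by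
  simp [dar, show (2 * m + 2) % 2 = 0 by omega]

variable {f₁ f₂}

theorem dar_eq_zero_of_lt (hf₁ : constantCoeff f₁ = 0) (hf₂ : constantCoeff f₂ = 0) {n k : ℕ}
    (h : n < k) : dar b g f₁ f₂ n k = 0 := by
  have hX₁ : X ∣ f₁ := X_dvd_iff.2 hf₁
  have hX₂ : X ∣ f₂ := X_dvd_iff.2 hf₂
  have hXF (m : ℕ) : ((X : K⟦X⟧) ^ 2) ^ m ∣ (f₁ * f₂) ^ m :=
    pow_dvd_pow_of_dvd (by rw [sq]; exact mul_dvd_mul hX₁ hX₂) m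
  obtain ⟨m, rfl | rfl⟩ := Nat.even_or_odd' k
  · obtain _ | m := m
    · omega
    rw [show 2 * (m + 1) = 2 * m + 2 by ring] at h ⊢
    rw [dar_two_mul_add_two]
    refine X_pow_dvd_iff.1 ?_ n h
    rw [show (X : K⟦X⟧) ^ (2 * m + 2) = X * X * (X ^ 2) ^ m by ring]
    exact mul_dvd_mul (mul_dvd_mul (dvd_mul_right X g) hX₁) (hXF m)
  · rw [dar_two_mul_add_one]
    refine X_pow_dvd_iff.1 ?_ n h
    rw [show (X : K⟦X⟧) ^ (2 * m + 1) = X * (X ^ 2) ^ m by ring]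
    exact mul_dvd_mul (dvd_mul_right X g) (hXF m)

theorem sum_dar_mul_coeff (hf₁ : constantCoeff f₁ = 0) (hf₂ : constantCoeff f₂ = 0)
    {W : K⟦X⟧} {w : K} {A B : K⟦X⟧}
    (hW : W = C w + X * expand 2 two_ne_zero A + X ^ 2 * expand 2 two_ne_zero B) (n : ℕ) :
    ∑ j ∈ range (n + 1), dar b g f₁ f₂ n j * coeff j W =
      coeff n (C w * b + X * g * psComp A (f₁ * f₂) + X * g * f₁ * psComp B (f₁ * f₂)) := by
  have hF : constantCoeff (f₁ * f₂) = 0 := by rw [map_mul, hf₁, zero_mul]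
  rw [sum_subset (range_subset_range.2 (show n + 1 ≤ 2 * (n + 1) + 1 by omega))
      fun j _ hj => by rw [dar_eq_zero_of_lt b g hf₁ hf₂ (by simpa using hj), zero_mul],
    sum_range_two_mul_add_one, map_add, map_add, coeff_C_mul, coeff_mul_psComp hF,
    coeff_mul_psComp hF, add_assoc, ← sum_add_distrib, hW]
  simp only [dar_zero, dar_two_mul_add_one, dar_two_mul_add_two,
    coeff_zero_C_add_X_mul_expand_two, coeff_odd_C_add_X_mul_expand_two,
    coeff_even_C_add_X_mul_expand_two]
  rw [mul_comm]
  exact congrArg _ (sum_congr rfl fun _ _ => by ring)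

theorem sum_dar_mul_dar_zero (hf₁ : constantCoeff f₁ = 0) (hf₂ : constantCoeff f₂ = 0)
    {c C' : K⟦X⟧} (hc : c = C (constantCoeff c) + X ^ 2 * expand 2 two_ne_zero C')
    (d h₁ h₂ : K⟦X⟧) (n : ℕ) :
    ∑ j ∈ range (n + 1), dar b g f₁ f₂ n j * dar c d h₁ h₂ j 0 =
      coeff n (C (constantCoeff c) * b + X * g * f₁ * psComp C' (f₁ * f₂)) := by
  have hF : constantCoeff (f₁ * f₂) = 0 := by rw [map_mul, hf₁, zero_mul]
  have hc' : c = C (constantCoeff c) + X * expand 2 two_ne_zero 0 +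
      X ^ 2 * expand 2 two_ne_zero C' := by
    rwa [map_zero, mul_zero, add_zero]
  simp only [dar_zero]
  rw [sum_dar_mul_coeff b g hf₁ hf₂ hc']
  simp only [psComp_eq_substAlgHom hF, map_zero, mul_zero, add_zero]

theorem sum_dar_mul_dar_two_mul_add_one (hf₁ : constantCoeff f₁ = 0)
    (hf₂ : constantCoeff f₂ = 0) (c D' H₁ H₂ : K⟦X⟧) (n m : ℕ) :
    ∑ j ∈ range (n + 1), dar b g f₁ f₂ n j *
        dar c (expand 2 two_ne_zero D') (X * expand 2 two_ne_zero H₁)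
          (X * expand 2 two_ne_zero H₂) j (2 * m + 1) =
      coeff n (X * (g * psComp D' (f₁ * f₂)) *
        (f₁ * psComp H₁ (f₁ * f₂) * (f₂ * psComp H₂ (f₁ * f₂))) ^ m) := by
  have hF : constantCoeff (f₁ * f₂) = 0 := by rw [map_mul, hf₁, zero_mul]
  have hcol : X * expand 2 two_ne_zero D' *
      (X * expand 2 two_ne_zero H₁ * (X * expand 2 two_ne_zero H₂)) ^ m =
        C 0 + X * expand 2 two_ne_zero (D' * (X * (H₁ * H₂)) ^ m) +
          X ^ 2 * expand 2 two_ne_zero 0 := by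
    simp only [map_zero, map_mul, map_pow, expand_X]
    ring
  simp only [dar_two_mul_add_one]
  rw [sum_dar_mul_coeff b g hf₁ hf₂ hcol]
  simp only [psComp_eq_substAlgHom hF, map_zero, map_mul, map_pow, substAlgHom_X]
  congr 1
  ring

theorem sum_dar_mul_dar_two_mul_add_two (hf₁ : constantCoeff f₁ = 0)
    (hf₂ : constantCoeff f₂ = 0) (c D' H₁ H₂ : K⟦X⟧) (n m : ℕ) :
    ∑ j ∈ range (n + 1), dar b g f₁ f₂ n j *
        dar c (expand 2 two_ne_zero D') (X * expand 2 two_ne_zero H₁)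
          (X * expand 2 two_ne_zero H₂) j (2 * m + 2) =
      coeff n (X * (g * psComp D' (f₁ * f₂)) * (f₁ * psComp H₁ (f₁ * f₂)) *
        (f₁ * psComp H₁ (f₁ * f₂) * (f₂ * psComp H₂ (f₁ * f₂))) ^ m) := by
  have hF : constantCoeff (f₁ * f₂) = 0 := by rw [map_mul, hf₁, zero_mul]
  have hcol : X * expand 2 two_ne_zero D' * (X * expand 2 two_ne_zero H₁) *
      (X * expand 2 two_ne_zero H₁ * (X * expand 2 two_ne_zero H₂)) ^ m =
        C 0 + X * expand 2 two_ne_zero 0 +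
          X ^ 2 * expand 2 two_ne_zero (D' * H₁ * (X * (H₁ * H₂)) ^ m) := by
    simp only [map_zero, map_mul, map_pow, expand_X]
    ring
  simp only [dar_two_mul_add_two]
  rw [sum_dar_mul_coeff b g hf₁ hf₂ hcol]
  simp only [psComp_eq_substAlgHom hF, map_zero, map_mul, map_pow, substAlgHom_X]
  congr 1
  ring

end DoubleAlmostRiordan

theorem dar_mul_general
    (b g f₁ f₂ : PowerSeries K)
    (hf₁o : ∀ k, coeff (2 * k) f₁ = 0)
    (hf₂o : ∀ k, coeff (2 * k) f₂ = 0)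
    (c d h₁ h₂ : PowerSeries K)
    (hce : ∀ k, coeff (2 * k + 1) c = 0)
    (hde : ∀ k, coeff (2 * k + 1) d = 0)
    (hh₁o : ∀ k, coeff (2 * k) h₁ = 0)
    (hh₂o : ∀ k, coeff (2 * k) h₂ = 0)
    (C' D' H₁ H₂ : PowerSeries K)
    (hC' : ∀ k, coeff k C' = coeff (2 * k + 2) c)
    (hD' : ∀ k, coeff k D' = coeff (2 * k) d)
    (hH₁ : ∀ k, coeff k H₁ = coeff (2 * k + 1) h₁)
    (hH₂ : ∀ k, coeff k H₂ = coeff (2 * k + 1) h₂) :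
    ∀ n k : ℕ,
      ∑ j ∈ Finset.range (n + 1), dar b g f₁ f₂ n j * dar c d h₁ h₂ j k =
        dar (C (constantCoeff c) * b + X * g * f₁ * psComp C' (f₁ * f₂))
          (g * psComp D' (f₁ * f₂))
          (f₁ * psComp H₁ (f₁ * f₂))
          (f₂ * psComp H₂ (f₁ * f₂)) n k := by
  intro n k
  have hf₁ : constantCoeff f₁ = 0 := by simpa using hf₁o 0
  have hf₂ : constantCoeff f₂ = 0 := by simpa using hf₂o 0
  have hc := eq_C_add_X_sq_mul_expand_two hce hC'
  obtain rfl := eq_expand_two hde hD'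
  obtain rfl := eq_X_mul_expand_two hh₁o hH₁
  obtain rfl := eq_X_mul_expand_two hh₂o hH₂
  obtain ⟨m, rfl | rfl⟩ := Nat.even_or_odd' k
  · obtain _ | m := m
    · rw [mul_zero, sum_dar_mul_dar_zero b g hf₁ hf₂ hc, dar_zero]
    · rw [show 2 * (m + 1) = 2 * m + 2 by ring, sum_dar_mul_dar_two_mul_add_two b g hf₁ hf₂,
        dar_two_mul_add_two]
  · rw [sum_dar_mul_dar_two_mul_add_one b g hf₁ hf₂, dar_two_mul_add_one]

/-- Product formula: double almost-Riordan arrays are closed under matrix product. -/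
theorem dar_mul
    (b g f₁ f₂ : PowerSeries K)
    (hbe : ∀ k, coeff (2 * k + 1) b = 0)
    (hge : ∀ k, coeff (2 * k + 1) g = 0)
    (hb0 : constantCoeff b ≠ 0)
    (hg0 : constantCoeff g ≠ 0)
    (hf₁o : ∀ k, coeff (2 * k) f₁ = 0)
    (hf₂o : ∀ k, coeff (2 * k) f₂ = 0)
    (hf₁1 : coeff 1 f₁ ≠ 0)
    (hf₂1 : coeff 1 f₂ ≠ 0)
    (c d h₁ h₂ : PowerSeries K)
    (hce : ∀ k, coeff (2 * k + 1) c = 0)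
    (hde : ∀ k, coeff (2 * k + 1) d = 0)
    (hc0 : constantCoeff c ≠ 0)
    (hd0 : constantCoeff d ≠ 0)
    (hh₁o : ∀ k, coeff (2 * k) h₁ = 0)
    (hh₂o : ∀ k, coeff (2 * k) h₂ = 0)
    (hh₁1 : coeff 1 h₁ ≠ 0)
    (hh₂1 : coeff 1 h₂ ≠ 0)
    (C' D' H₁ H₂ : PowerSeries K)
    (hC' : ∀ k, coeff k C' = coeff (2 * k + 2) c)
    (hD' : ∀ k, coeff k D' = coeff (2 * k) d)
    (hH₁ : ∀ k, coeff k H₁ = coeff (2 * k + 1) h₁)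
    (hH₂ : ∀ k, coeff k H₂ = coeff (2 * k + 1) h₂) :
    ∀ n k : ℕ,
      ∑ j ∈ Finset.range (n + 1), dar b g f₁ f₂ n j * dar c d h₁ h₂ j k =
        dar (C (constantCoeff c) * b + X * g * f₁ * psComp C' (f₁ * f₂))
          (g * psComp D' (f₁ * f₂))
          (f₁ * psComp H₁ (f₁ * f₂))
          (f₂ * psComp H₂ (f₁ * f₂)) n k :=
  dar_mul_general b g f₁ f₂ hf₁o hf₂o c d h₁ h₂ hce hde hh₁o hh₂o C' D' H₁ H₂ hC' hD' hH₁ hH₂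
end

section
/- A-sequence recurrence for double almost-Riordan arrays: Suppose Ã ∈ K[[t]] satisfies f₁·f₂ = t²·(Ã∘(f₁f₂)), and set a_j := [t^j]Ã (the A-sequence of (b|g;f₁,f₂)). Then for all n ≥ 2 and all k ≥ 3, d_{n,k} = a₀·d_{n−2,k−2} + a₁·d_{n−2,k} + a₂·d_{n−2,k+2} + ⋯ = Σ_{j≥0} a_j·d_{n−2, k+2(j−1)}, where the sum has only finitely many nonzero terms since d_{m,l} = 0 whenever l > m. -/
open PowerSeries

variable {K : Type*} [Field K]

/-! Writing `d_k` for the generating series of column `k ≥ 1`, one has `d_k = d_{k-2} · f₁f₂`,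
and the hypothesis turns this into `d_k = t² · d_{k-2} · (Ã ∘ f₁f₂)`. It also forces
`(f₁f₂)(0) = 0`, so `tʲ ∣ (f₁f₂)ʲ` and the coefficient of `tⁿ` of the right-hand side is the
finite sum `Σⱼ aⱼ [tⁿ⁻²](d_{k-2} (f₁f₂)ʲ) = Σⱼ aⱼ d_{n-2,k-2+2j}`. -/

section Substitution

variable {h : PowerSeries K}

theorem coeff_mul_pow_eq_zero_of_lt (hh : constantCoeff h = 0) (U : PowerSeries K)
    {n j : ℕ} (hnj : n < j) : coeff n (U * h ^ j) = 0 :=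
  X_pow_dvd_iff.1 (dvd_mul_of_dvd_right (pow_dvd_pow_of_dvd (X_dvd_iff.2 hh) j) U) n hnj

theorem coeff_psComp_eq_sum_range (hh : constantCoeff h = 0) (A : PowerSeries K)
    {m N : ℕ} (hmN : m ≤ N) :
    coeff m (psComp A h) = ∑ j ∈ Finset.range (N + 1), coeff j A * coeff m (h ^ j) := by
  rw [psComp, coeff_mk]
  refine Finset.sum_subset (Finset.range_subset_range.2 (by omega)) fun j _ hj => ?_
  have hmj : m < j := by simpa using hj
  rw [← one_mul (h ^ j), coeff_mul_pow_eq_zero_of_lt hh 1 hmj, mul_zero]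

theorem coeff_mul_psComp_s4 (hh : constantCoeff h = 0) (U A : PowerSeries K) (n : ℕ) :
    coeff n (U * psComp A h) = ∑ᶠ j : ℕ, coeff j A * coeff n (U * h ^ j) := by
  have hsupp : (Function.support fun j => coeff j A * coeff n (U * h ^ j)) ⊆
      (Finset.range (n + 1) : Set ℕ) := by
    intro j hj
    by_contra hjn
    have hnj : n < j := by simpa using hjn
    exact hj (by simp only [coeff_mul_pow_eq_zero_of_lt hh U hnj, mul_zero])
  rw [finsum_eq_finsetSum_of_support_subset _ hsupp, coeff_mul]
  simp_rw [coeff_mul, Finset.mul_sum]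
  rw [Finset.sum_comm]
  refine Finset.sum_congr rfl fun p hp => ?_
  rw [coeff_psComp_eq_sum_range hh A (N := n) (by simp at hp; omega), Finset.mul_sum]
  exact Finset.sum_congr rfl fun j _ => mul_left_comm _ _ _

end Substitution

section Columns

variable (g f₁ f₂ : PowerSeries K)

/-- Column `k ≥ 1` of `(b | g ; f₁, f₂)`, both parities in one formula; `darCol 0` is not
the column `b`. -/
noncomputable def darCol (k : ℕ) : PowerSeries K :=
  X * g * (if k % 2 = 1 then 1 else f₁) * (f₁ * f₂) ^ ((k - 1) / 2)

theorem dar_eq_coeff_darCol (b : PowerSeries K) (n : ℕ) {k : ℕ} (hk : k ≠ 0) :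
    dar b g f₁ f₂ n k = coeff n (darCol g f₁ f₂ k) := by
  rw [dar, darCol, if_neg hk]
  split_ifs with hodd
  · rw [mul_one]
  · rw [show (k - 2) / 2 = (k - 1) / 2 by omega]

theorem darCol_add_two_mul {k : ℕ} (hk : k ≠ 0) (j : ℕ) :
    darCol g f₁ f₂ (k + 2 * j) = darCol g f₁ f₂ k * (f₁ * f₂) ^ j := by
  rw [darCol, darCol, show (k + 2 * j) % 2 = k % 2 by omega,
    show (k + 2 * j - 1) / 2 = (k - 1) / 2 + j by omega, pow_add, ← mul_assoc]

end Columns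

theorem dar_A_seq_general
    (b g f₁ f₂ : PowerSeries K)
    (A : PowerSeries K)
    (hA : f₁ * f₂ = X ^ 2 * psComp A (f₁ * f₂)) :
    ∀ n k : ℕ, 2 ≤ n → 3 ≤ k →
      dar b g f₁ f₂ n k =
        ∑ᶠ j : ℕ, coeff j A * dar b g f₁ f₂ (n - 2) (k + 2 * j - 2) := by
  intro n k hn hk
  set F := f₁ * f₂
  set D := darCol g f₁ f₂ (k - 2)
  have hF0 : constantCoeff F = 0 := by rw [hA, map_mul, map_pow, constantCoeff_X]; ring
  have hcol : ∀ m j, dar b g f₁ f₂ m (k + 2 * j - 2) = coeff m (D * F ^ j) := fun m j => by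
    rw [dar_eq_coeff_darCol _ _ _ _ _ (by omega), show k + 2 * j - 2 = k - 2 + 2 * j by omega,
      darCol_add_two_mul _ _ _ (by omega)]
  calc dar b g f₁ f₂ n k
      = coeff n (D * F) := by simpa using hcol n 1
    _ = coeff n (X ^ 2 * (D * psComp A F)) := by nth_rewrite 1 [hA]; ring_nf
    _ = coeff (n - 2) (D * psComp A F) := by rw [coeff_X_pow_mul', if_pos hn]
    _ = ∑ᶠ j : ℕ, coeff j A * dar b g f₁ f₂ (n - 2) (k + 2 * j - 2) := by
      simp only [coeff_mul_psComp_s4 hF0, hcol]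

/-- A-sequence recurrence for double almost-Riordan arrays. -/
theorem dar_A_seq
    (b g f₁ f₂ : PowerSeries K)
    (hbe : ∀ k, coeff (2 * k + 1) b = 0)
    (hge : ∀ k, coeff (2 * k + 1) g = 0)
    (hb0 : constantCoeff b ≠ 0)
    (hg0 : constantCoeff g ≠ 0)
    (hf₁o : ∀ k, coeff (2 * k) f₁ = 0)
    (hf₂o : ∀ k, coeff (2 * k) f₂ = 0)
    (hf₁1 : coeff 1 f₁ ≠ 0)
    (hf₂1 : coeff 1 f₂ ≠ 0)
    (A : PowerSeries K)
    (hA : f₁ * f₂ = X ^ 2 * psComp A (f₁ * f₂)) :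
    ∀ n k : ℕ, 2 ≤ n → 3 ≤ k →
      dar b g f₁ f₂ n k =
        ∑ᶠ j : ℕ, coeff j A * dar b g f₁ f₂ (n - 2) (k + 2 * j - 2) :=
  dar_A_seq_general b g f₁ f₂ A hA
end
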